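/- Let f : {0,1,...,m} → ℝ be a function with no local minimum, i.e., for all ζ with 1 ≤ ζ ≤ m-1, f(ζ) > min(f(ζ-1), f(ζ+1)). If f is nonnegative and for some ζ₀ ∈ {0,...,m} and ν ≥ 0 we have ∑_{ζ ≥ ζ₀} f(ζ) ≥ ν and ∑_{ζ ≤ ζ₀} f(ζ) ≥ ν, then f(ζ₀) ≥ ν/m. -/

import Mathlib

/-!
Without interior local minima `f` is unimodal: once it strictly decreases at some step, the
middle value of any later triple cannot be a local minimum, so it keeps strictly decreasing up
to `m`. Hence `f` is either nondecreasing on `[0, ζ₀]` or nonincreasing on `[ζ₀, m]`, and on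
that side every term of the sum is at most `f ζ₀`. That side has at most `m` points, unless it
is all of `[0, m]`, in which case the other side `{m}` gives `ν ≤ f m` directly.
-/

open Finset

def NoInteriorLocalMin {α : Type*} [LinearOrder α] (f : ℕ → α) (m : ℕ) : Prop :=
  ∀ n, n + 1 < m → min (f n) (f (n + 2)) < f (n + 1)

namespace NoInteriorLocalMin

variable {α : Type*} [LinearOrder α] {f : ℕ → α} {m : ℕ}

theorem strictAntiOn_Icc (hf : NoInteriorLocalMin f m) {k : ℕ} (hk : f (k + 1) < f k) :
    StrictAntiOn f (Set.Icc k m) := by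
  have step : ∀ a, k ≤ a → a + 1 ≤ m → f (a + 1) < f a := by
    intro a hka
    induction a, hka using Nat.le_induction with
    | base => exact fun _ => hk
    | succ a hka ih =>
      intro ha
      exact (min_lt_iff.mp (hf a (by omega))).resolve_left (ih (by omega)).le.not_gt
  exact strictAntiOn_of_add_one_lt Set.ordConnected_Icc fun a _ ha ha1 => step a ha.1 ha1.2

theorem monotoneOn_or_antitoneOn (hf : NoInteriorLocalMin f m) (ζ : ℕ) :
    MonotoneOn f (Set.Icc 0 ζ) ∨ 0 < ζ ∧ AntitoneOn f (Set.Icc ζ m) := by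
  by_cases hmono : ∀ a < ζ, f a ≤ f (a + 1)
  · left
    exact monotoneOn_of_le_add_one Set.ordConnected_Icc fun a _ _ ha1 => hmono a ha1.2
  · right
    push Not at hmono
    obtain ⟨k, hkζ, hk⟩ := hmono
    exact ⟨by omega,
      ((hf.strictAntiOn_Icc hk).antitoneOn).mono (Set.Icc_subset_Icc hkζ.le le_rfl)⟩

end NoInteriorLocalMin

section SumBounds

variable {β : Type*} [AddCommMonoid β] [PartialOrder β] [IsOrderedAddMonoid β] {f : ℕ → β}
  {a b : ℕ}

theorem MonotoneOn.sum_Icc_le (hf : MonotoneOn f (Set.Icc a b)) :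
    ∑ i ∈ Icc a b, f i ≤ (b + 1 - a) • f b := by
  rw [← Nat.card_Icc]
  refine sum_le_card_nsmul _ _ _ fun i hi => ?_
  rw [mem_Icc] at hi
  exact hf hi ⟨hi.1.trans hi.2, le_rfl⟩ hi.2

theorem AntitoneOn.sum_Icc_le (hf : AntitoneOn f (Set.Icc a b)) :
    ∑ i ∈ Icc a b, f i ≤ (b + 1 - a) • f a := by
  rw [← Nat.card_Icc]
  refine sum_le_card_nsmul _ _ _ fun i hi => ?_
  rw [mem_Icc] at hi
  exact hf ⟨le_rfl, hi.1.trans hi.2⟩ hi hi.1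

end SumBounds

theorem div_le_of_le_nsmul {ν x : ℝ} {c m : ℕ} (hν : 0 ≤ ν) (hc : 1 ≤ c) (hcm : c ≤ m)
    (h : ν ≤ c • x) : ν / m ≤ x := by
  rw [nsmul_eq_mul] at h
  have hc' : (1 : ℝ) ≤ c := by exact_mod_cast hc
  have hcm' : (c : ℝ) ≤ m := by exact_mod_cast hcm
  have hx : 0 ≤ x := nonneg_of_mul_nonneg_right (hν.trans h) (by linarith)
  rw [div_le_iff₀ (by linarith)]
  nlinarith

theorem no_local_min_isoperimetry_general (m : ℕ) (hm : 1 ≤ m) (f : ℕ → ℝ)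
    (hnlm : ∀ ζ, 1 ≤ ζ → ζ ≤ m - 1 → f ζ > min (f (ζ - 1)) (f (ζ + 1)))
    (ζ₀ : ℕ) (hζ₀ : ζ₀ ≤ m) (ν : ℝ) (hν : 0 ≤ ν)
    (hupper : ν ≤ ∑ ζ ∈ Finset.Icc ζ₀ m, f ζ)
    (hlower : ν ≤ ∑ ζ ∈ Finset.Icc 0 ζ₀, f ζ) :
    f ζ₀ ≥ ν / m := by
  have hf : NoInteriorLocalMin f m := fun n hn => by
    simpa using hnlm (n + 1) (by omega) (by omega)
  rcases hf.monotoneOn_or_antitoneOn ζ₀ with hmono | ⟨hpos, hanti⟩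
  · rcases hζ₀.lt_or_eq with hlt | rfl
    · exact div_le_of_le_nsmul hν (by omega) (by omega) (hlower.trans hmono.sum_Icc_le)
    · refine div_le_of_le_nsmul hν le_rfl hm ?_
      simpa using hupper
  · exact div_le_of_le_nsmul hν (by omega) (by omega) (hupper.trans hanti.sum_Icc_le)

/-- No-local-minimum functions: if the tail sums on both sides of `ζ₀` are at least `ν`,
then `f ζ₀ ≥ ν / m`. -/
theorem no_local_min_isoperimetry (m : ℕ) (hm : 1 ≤ m) (f : ℕ → ℝ)
    (hnonneg : ∀ ζ ≤ m, 0 ≤ f ζ)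
    (hnlm : ∀ ζ, 1 ≤ ζ → ζ ≤ m - 1 → f ζ > min (f (ζ - 1)) (f (ζ + 1)))
    (ζ₀ : ℕ) (hζ₀ : ζ₀ ≤ m) (ν : ℝ) (hν : 0 ≤ ν)
    (hupper : ν ≤ ∑ ζ ∈ Finset.Icc ζ₀ m, f ζ)
    (hlower : ν ≤ ∑ ζ ∈ Finset.Icc 0 ζ₀, f ζ) :
    f ζ₀ ≥ ν / m :=
  no_local_min_isoperimetry_general m hm f hnlm ζ₀ hζ₀ ν hν hupper hlower
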